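/- For every bipartite state ρ_AB of dimension m×n, the infimum in the definition of the POVM quantum discord D_P(ρ_AB|B) over all POVMs on ℂ^n equals the infimum over POVMs on ℂ^n consisting of at most n² operators. -/

import Mathlib

open scoped Kronecker ComplexOrder Matrix

noncomputable section

/-- A quantum state (density matrix): positive semidefinite with trace 1. -/
def IsState {α : Type*} [Fintype α] (ρ : Matrix α α ℂ) : Prop :=
  ρ.PosSemidef ∧ ρ.trace = 1

/-- The rank-one matrix `ψ ψ*`. -/
def vecState {α : Type*} (ψ : α → ℂ) : Matrix α α ℂ :=
  fun i j => ψ i * star (ψ j)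

/-- Kronecker product of two vectors. -/
def kronVec {α β : Type*} (a : α → ℂ) (b : β → ℂ) : α × β → ℂ :=
  fun p => a p.1 * b p.2

/-- Partial trace over the first tensor factor. -/
def ptrace1 {α β : Type*} [Fintype α] (M : Matrix (α × β) (α × β) ℂ) : Matrix β β ℂ :=
  fun k k' => ∑ i, M (i, k) (i, k')

/-- Partial trace over the second tensor factor. -/
def ptrace2 {α β : Type*} [Fintype β] (M : Matrix (α × β) (α × β) ℂ) : Matrix α α ℂ :=
  fun i i' => ∑ k, M (i, k) (i', k)

/-- Partial trace over the third factor of a triple tensor product. -/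
def ptrace3 {α β γ : Type*} [Fintype γ]
    (M : Matrix (α × β × γ) (α × β × γ) ℂ) : Matrix (α × β) (α × β) ℂ :=
  fun p q => ∑ t, M (p.1, (p.2, t)) (q.1, (q.2, t))

/-- Partial trace over the middle factor of a triple tensor product. -/
def ptraceMid {α β γ : Type*} [Fintype β]
    (M : Matrix (α × β × γ) (α × β × γ) ℂ) : Matrix (α × γ) (α × γ) ℂ :=
  fun p q => ∑ k, M (p.1, (k, p.2)) (q.1, (k, q.2))

/-- Partial trace over the primed (A' and B') factors of a state on (A⊗A')⊗(B⊗B'). -/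
def ptracePrimes {α α' β β' : Type*} [Fintype α'] [Fintype β']
    (M : Matrix ((α × α') × β × β') ((α × α') × β × β') ℂ) : Matrix (α × β) (α × β) ℂ :=
  fun p q => ∑ s, ∑ t, M ((p.1, s), (p.2, t)) ((q.1, s), (q.2, t))

/-- Partial trace over the unprimed (A and B) factors of a state on (A⊗A')⊗(B⊗B'). -/
def ptraceUnprimed {α α' β β' : Type*} [Fintype α] [Fintype β]
    (M : Matrix ((α × α') × β × β') ((α × α') × β × β') ℂ) : Matrix (α' × β') (α' × β') ℂ :=
  fun p q => ∑ i, ∑ k, M ((i, p.1), (k, p.2)) ((i, q.1), (k, q.2))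

/-- Von Neumann entropy: `S(ρ) = -∑ λᵢ log λᵢ` where λᵢ are the eigenvalues. -/
def vnEntropy {α : Type*} [Fintype α] [DecidableEq α] (ρ : Matrix α α ℂ) : ℝ :=
  if h : ρ.IsHermitian then ∑ i, Real.negMulLog (h.eigenvalues i) else 0

/-- Entanglement of formation. -/
def EoF {α β : Type*} [Fintype α] [Fintype β] [DecidableEq α]
    (ρ : Matrix (α × β) (α × β) ℂ) : ℝ :=
  sInf {x : ℝ | ∃ (k : ℕ) (p : Fin k → ℝ) (ψ : Fin k → α × β → ℂ),
    (∀ i, 0 ≤ p i) ∧ (∀ i, star (ψ i) ⬝ᵥ ψ i = 1) ∧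
    (∑ i, (p i : ℂ) • vecState (ψ i)) = ρ ∧
    x = ∑ i, p i * vnEntropy (ptrace2 (vecState (ψ i)))}

/-- Separability of a bipartite state. -/
def IsSepState {α β : Type*} [Fintype α] [Fintype β]
    (ρ : Matrix (α × β) (α × β) ℂ) : Prop :=
  ∃ (k : ℕ) (p : Fin k → ℝ) (a : Fin k → α → ℂ) (b : Fin k → β → ℂ),
    (∀ i, 0 ≤ p i) ∧ (∑ i, p i) = 1 ∧
    (∀ i, star (a i) ⬝ᵥ a i = 1) ∧ (∀ i, star (b i) ⬝ᵥ b i = 1) ∧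
    ρ = ∑ i, (p i : ℂ) • (vecState (a i) ⊗ₖ vecState (b i))

/-- Classical-classical bipartite states. -/
def IsCC {α β : Type*} [Fintype α] [Fintype β] [DecidableEq α] [DecidableEq β]
    (ρ : Matrix (α × β) (α × β) ℂ) : Prop :=
  ∃ (a : α → α → ℂ) (b : β → β → ℂ) (p : α → β → ℝ),
    (∀ i j, star (a i) ⬝ᵥ a j = if i = j then 1 else 0) ∧
    (∀ i j, star (b i) ⬝ᵥ b j = if i = j then 1 else 0) ∧
    (∀ i j, 0 ≤ p i j) ∧ (∑ i, ∑ j, p i j) = 1 ∧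
    ρ = ∑ i, ∑ j, (p i j : ℂ) • (vecState (a i) ⊗ₖ vecState (b j))

/-- Quantum-classical bipartite states (classical on the second factor). -/
def IsQC {α β : Type*} [Fintype α] [Fintype β] [DecidableEq β]
    (ρ : Matrix (α × β) (α × β) ℂ) : Prop :=
  ∃ (b : β → β → ℂ) (σ : β → Matrix α α ℂ) (p : β → ℝ),
    (∀ i j, star (b i) ⬝ᵥ b j = if i = j then 1 else 0) ∧
    (∀ i, IsState (σ i)) ∧ (∀ i, 0 ≤ p i) ∧ (∑ i, p i) = 1 ∧
    ρ = ∑ i, (p i : ℂ) • (σ i ⊗ₖ vecState (b i))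

/-- A POVM: finitely many positive semidefinite operators summing to the identity. -/
def IsPOVM {γ : Type*} [Fintype γ] [DecidableEq γ] {k : ℕ}
    (P : Fin k → Matrix γ γ ℂ) : Prop :=
  (∀ i, (P i).PosSemidef) ∧ (∑ i, P i) = 1

/-- A von Neumann measurement: pairwise-orthogonal orthogonal projections summing to I. -/
def IsVNMeas {γ : Type*} [Fintype γ] [DecidableEq γ] {k : ℕ}
    (P : Fin k → Matrix γ γ ℂ) : Prop :=
  (∀ i, (P i).IsHermitian) ∧ (∀ i, P i * P i = P i) ∧
  (∀ i j, i ≠ j → P i * P j = 0) ∧ (∑ i, P i) = 1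

/-- The term `pᵢ S(ρ_A^i)` for a measurement operator `P` on the second subsystem,
with the convention that the term vanishes when `pᵢ = 0`. -/
def measTerm {α β : Type*} [Fintype α] [Fintype β] [DecidableEq α] [DecidableEq β]
    (ρ : Matrix (α × β) (α × β) ℂ) (P : Matrix β β ℂ) : ℝ :=
  if _h : (Matrix.trace (ρ * ((1 : Matrix α α ℂ) ⊗ₖ P))).re = 0 then 0
  else (Matrix.trace (ρ * ((1 : Matrix α α ℂ) ⊗ₖ P))).re *
    vnEntropy ((((Matrix.trace (ρ * ((1 : Matrix α α ℂ) ⊗ₖ P))).re : ℂ))⁻¹ •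
      ptrace2 (ρ * ((1 : Matrix α α ℂ) ⊗ₖ P)))

/-- Quantum discord with POVM measurements on the second subsystem. -/
def discordP {α β : Type*} [Fintype α] [Fintype β] [DecidableEq α] [DecidableEq β]
    (ρ : Matrix (α × β) (α × β) ℂ) : ℝ :=
  vnEntropy (ptrace1 ρ) - vnEntropy ρ +
    sInf {x : ℝ | ∃ (k : ℕ) (P : Fin k → Matrix β β ℂ),
      IsPOVM P ∧ x = ∑ i, measTerm ρ (P i)}

/-- Quantum discord with von Neumann measurements on the second subsystem. -/
def discordN {α β : Type*} [Fintype α] [Fintype β] [DecidableEq α] [DecidableEq β]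
    (ρ : Matrix (α × β) (α × β) ℂ) : ℝ :=
  vnEntropy (ptrace1 ρ) - vnEntropy ρ +
    sInf {x : ℝ | ∃ (k : ℕ) (P : Fin k → Matrix β β ℂ),
      IsVNMeas P ∧ x = ∑ i, measTerm ρ (P i)}

/-- The trace norm `‖X‖₁ = tr √(X* X)`. -/
def traceNorm {α : Type*} [Fintype α] [DecidableEq α] (X : Matrix α α ℂ) : ℝ :=
  (((Matrix.posSemidef_conjTranspose_mul_self X).1.eigenvectorUnitary : Matrix α α ℂ) *
    Matrix.diagonal (((↑) : ℝ → ℂ) ∘ Real.sqrt ∘ (Matrix.posSemidef_conjTranspose_mul_self X).1.eigenvalues) *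
    (star (Matrix.posSemidef_conjTranspose_mul_self X).1.eigenvectorUnitary : Matrix α α ℂ)).trace.re

/-- The Frobenius norm `‖X‖₂ = √(tr (X* X))`. -/
def frobNorm {α β : Type*} [Fintype α] [Fintype β] (X : Matrix α β ℂ) : ℝ :=
  Real.sqrt (Matrix.trace (Xᴴ * X)).re

/-- Matrix logarithm taken on the support (eigenvalue 0 is sent to 0). -/
def matLog {α : Type*} [Fintype α] [DecidableEq α] (A : Matrix α α ℂ) : Matrix α α ℂ :=
  if h : A.IsHermitian then
    (Matrix.IsHermitian.eigenvectorUnitary h : Matrix α α ℂ) *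
      Matrix.diagonal (fun i => if h.eigenvalues i = 0 then 0
        else (Real.log (h.eigenvalues i) : ℂ)) *
      (star (Matrix.IsHermitian.eigenvectorUnitary h) : Matrix α α ℂ)
  else 0

end

/-! A POVM with more than `n²` elements is linearly dependent over `ℝ` inside the `n²`-dimensional
space of Hermitian matrices. Normalise a dependence `∑ cᵢ Pᵢ = 0` so that its largest coefficient
is `1` and `∑ cᵢ pᵢ S(ρ_A^i) ≥ 0`; then `(1 - cᵢ) Pᵢ` is again a POVM, one of whose elements
vanishes, and since each term `pᵢ S(ρ_A^i)` is positively homogeneous in `Pᵢ`, its value does not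
exceed that of `P`. Dropping the zero element and repeating gives a POVM with at most `n²`
elements. -/

open Matrix

namespace Matrix

variable {ι : Type*}

/-- Injective on Hermitian matrices, because the entry at `(j, i)` has the same real part and the
opposite imaginary part as the entry at `(i, j)`. -/
def entryReAddIm : Matrix ι ι ℂ →ₗ[ℝ] (ι × ι → ℝ) where
  toFun A p := (A p.1 p.2).re + (A p.1 p.2).im
  map_add' A B := by
    ext p
    simp only [add_apply, Complex.add_re, Complex.add_im, Pi.add_apply]
    ring
  map_smul' c A := by
    ext p
    simp only [smul_apply, Complex.smul_re, Complex.smul_im, smul_eq_mul, RingHom.id_apply,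
      Pi.smul_apply]
    ring

theorem IsHermitian.eq_zero_of_entryReAddIm_eq_zero {A : Matrix ι ι ℂ} (hA : A.IsHermitian)
    (h : entryReAddIm A = 0) : A = 0 := by
  ext i j
  have hij : (A i j).re + (A i j).im = 0 := congrFun h (i, j)
  have hji : (A j i).re + (A j i).im = 0 := congrFun h (j, i)
  rw [← hA.apply j i, Complex.star_def, Complex.conj_re, Complex.conj_im] at hji
  apply Complex.ext <;> simp only [zero_apply, Complex.zero_re, Complex.zero_im] <;> linarith

theorem exists_sum_smul_eq_zero_of_isHermitian [Fintype ι] {κ : Type*} [Fintype κ]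
    (hκ : Fintype.card ι ^ 2 < Fintype.card κ) {P : κ → Matrix ι ι ℂ}
    (hP : ∀ i, (P i).IsHermitian) : ∃ c : κ → ℝ, c ≠ 0 ∧ ∑ i, c i • P i = 0 := by
  have hdep : ¬ LinearIndependent ℝ (entryReAddIm ∘ P) := fun hli => by
    have := hli.fintype_card_le_finrank
    rw [Module.finrank_fintype_fun_eq_card, Fintype.card_prod, ← sq] at this
    omega
  obtain ⟨c, hc, i, hci⟩ := Fintype.not_linearIndependent_iff.mp hdep
  refine ⟨c, fun h => hci (congrFun h i), ?_⟩
  refine IsHermitian.eq_zero_of_entryReAddIm_eq_zero ?_ (by simpa [map_sum] using hc)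
  exact isSelfAdjoint_sum _ fun i _ => .smul (.all (c i)) (hP i)

theorem exists_pos_of_sum_smul_eq_zero [Fintype ι] {κ : Type*} [Fintype κ] {P : κ → Matrix ι ι ℂ}
    (hP : ∀ i, (P i).PosSemidef) (hne : ∀ i, P i ≠ 0) {c : κ → ℝ} (hc : c ≠ 0)
    (hsum : ∑ i, c i • P i = 0) : ∃ i, 0 < c i := by
  have htrace : ∀ i, 0 < (P i).trace.re := fun i =>
    (Complex.pos_iff.mp <| (hP i).trace_nonneg.lt_of_ne
      (Ne.symm <| mt (hP i).trace_eq_zero_iff.mp (hne i))).1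
  have hsum_trace : ∑ i, c i * (P i).trace.re = 0 := by
    simpa [trace_sum, trace_smul, Complex.re_sum] using congrArg (fun M => M.trace.re) hsum
  by_contra! hnonpos
  refine hc (funext fun i => ?_)
  have := (Finset.sum_eq_zero_iff_of_nonpos fun j _ =>
    mul_nonpos_of_nonpos_of_nonneg (hnonpos j) (htrace j).le).mp hsum_trace i (Finset.mem_univ i)
  exact (mul_eq_zero.mp this).resolve_right (htrace i).ne'

end Matrix

theorem ptrace2_smul {α β : Type*} [Fintype β] (c : ℂ) (M : Matrix (α × β) (α × β) ℂ) :
    ptrace2 (c • M) = c • ptrace2 M := by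
  ext i i'
  simp [ptrace2, Finset.mul_sum]

namespace IsPOVM

variable {β : Type*} [Fintype β] [DecidableEq β]

theorem succAbove {k : ℕ} {P : Fin (k + 1) → Matrix β β ℂ} (hP : IsPOVM P) {i : Fin (k + 1)}
    (hi : P i = 0) : IsPOVM fun j => P (i.succAbove j) :=
  ⟨fun j => hP.1 _, by simpa [Fin.sum_univ_succAbove P i, hi] using hP.2⟩

theorem one_sub_smul {k : ℕ} {P : Fin k → Matrix β β ℂ} (hP : IsPOVM P) {c : Fin k → ℝ}
    (hc : ∀ i, c i ≤ 1) (hsum : ∑ i, c i • P i = 0) : IsPOVM fun i => (1 - c i) • P i :=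
  ⟨fun i => (hP.1 i).smul (sub_nonneg.mpr (hc i)), by
    simp only [sub_smul, one_smul, Finset.sum_sub_distrib, hsum, sub_zero, hP.2]⟩

end IsPOVM

section

variable {α β : Type*} [Fintype α] [Fintype β] [DecidableEq α] [DecidableEq β]

theorem measTerm_smul (ρ : Matrix (α × β) (α × β) ℂ) (P : Matrix β β ℂ) {s : ℝ} (hs : 0 ≤ s) :
    measTerm ρ (s • P) = s * measTerm ρ P := by
  have hkron : ρ * ((1 : Matrix α α ℂ) ⊗ₖ (s • P)) = (s : ℂ) • (ρ * (1 ⊗ₖ P)) := by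
    rw [← Complex.coe_smul, kronecker_smul, mul_smul_comm]
  unfold measTerm
  rw [hkron, trace_smul, ptrace2_smul]
  set z := (trace (ρ * ((1 : Matrix α α ℂ) ⊗ₖ P))).re
  have hre : ((s : ℂ) • trace (ρ * ((1 : Matrix α α ℂ) ⊗ₖ P))).re = s * z := by
    simp [z]
  rw [hre]
  rcases hs.eq_or_lt with rfl | hs
  · simp
  by_cases hz : z = 0
  · simp [hz]
  rw [dif_neg (mul_ne_zero hs.ne' hz), dif_neg hz, smul_smul]
  have hscalar : ((s * z : ℝ) : ℂ)⁻¹ * s = (z : ℂ)⁻¹ := by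
    have : (s : ℂ) ≠ 0 := by exact_mod_cast hs.ne'
    push_cast
    field_simp
  rw [hscalar]
  ring

theorem measTerm_zero (ρ : Matrix (α × β) (α × β) ℂ) : measTerm ρ (0 : Matrix β β ℂ) = 0 := by
  simpa using measTerm_smul ρ (0 : Matrix β β ℂ) le_rfl

theorem sum_measTerm_one_sub_smul (ρ : Matrix (α × β) (α × β) ℂ) {k : ℕ}
    (P : Fin k → Matrix β β ℂ) {c : Fin k → ℝ} (hc : ∀ i, c i ≤ 1) :
    ∑ i, measTerm ρ ((1 - c i) • P i) =
      ∑ i, measTerm ρ (P i) - ∑ i, c i * measTerm ρ (P i) := by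
  rw [← Finset.sum_sub_distrib]
  refine Finset.sum_congr rfl fun i _ => ?_
  rw [measTerm_smul ρ (P i) (sub_nonneg.mpr (hc i))]
  ring

theorem exists_povm_with_zero_sum_measTerm_le (ρ : Matrix (α × β) (α × β) ℂ) {k : ℕ}
    (hk : Fintype.card β ^ 2 < k) {P : Fin k → Matrix β β ℂ} (hP : IsPOVM P) :
    ∃ Q : Fin k → Matrix β β ℂ, IsPOVM Q ∧ (∃ i, Q i = 0) ∧
      ∑ i, measTerm ρ (Q i) ≤ ∑ i, measTerm ρ (P i) := by
  by_cases hzero : ∃ i, P i = 0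
  · exact ⟨P, hP, hzero, le_rfl⟩
  push Not at hzero
  obtain ⟨c, hc, hsum, hval⟩ : ∃ c : Fin k → ℝ, c ≠ 0 ∧ ∑ i, c i • P i = 0 ∧
      0 ≤ ∑ i, c i * measTerm ρ (P i) := by
    obtain ⟨c, hc, hsum⟩ := exists_sum_smul_eq_zero_of_isHermitian
      (by simpa using hk) fun i => (hP.1 i).isHermitian
    rcases le_total 0 (∑ i, c i * measTerm ρ (P i)) with hval | hval
    · exact ⟨c, hc, hsum, hval⟩
    · refine ⟨-c, neg_ne_zero.mpr hc, ?_, ?_⟩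
      · simpa [neg_smul, Finset.sum_neg_distrib] using hsum
      · simpa [neg_mul, Finset.sum_neg_distrib] using neg_nonneg.mpr hval
  obtain ⟨i, hi⟩ := exists_pos_of_sum_smul_eq_zero hP.1 hzero hc hsum
  obtain ⟨imax, -, hmax⟩ := Finset.exists_max_image Finset.univ c ⟨i, Finset.mem_univ i⟩
  have hcmax : 0 < c imax := hi.trans_le (hmax i (Finset.mem_univ i))
  set d := fun j => c j / c imax
  have hd : ∀ j, d j ≤ 1 := fun j =>
    (div_le_one hcmax).mpr (hmax j (Finset.mem_univ j))
  refine ⟨fun j => (1 - d j) • P j, hP.one_sub_smul hd ?_, ⟨imax, ?_⟩, ?_⟩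
  · simp only [d, div_eq_inv_mul, mul_smul, ← Finset.smul_sum, hsum, smul_zero]
  · simp [d, hcmax.ne']
  · rw [sum_measTerm_one_sub_smul ρ P hd, sub_le_self_iff]
    simp only [d, div_mul_eq_mul_div, ← Finset.sum_div]
    exact div_nonneg hval hcmax.le

theorem exists_povm_card_le_sq_sum_measTerm_le (ρ : Matrix (α × β) (α × β) ℂ) :
    ∀ {k : ℕ} (P : Fin k → Matrix β β ℂ), IsPOVM P →
      ∃ k' ≤ Fintype.card β ^ 2, ∃ P' : Fin k' → Matrix β β ℂ,
        IsPOVM P' ∧ ∑ i, measTerm ρ (P' i) ≤ ∑ i, measTerm ρ (P i)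
  | 0, P, hP => ⟨0, Nat.zero_le _, P, hP, le_rfl⟩
  | k + 1, P, hP => by
    by_cases hk : k + 1 ≤ Fintype.card β ^ 2
    · exact ⟨k + 1, hk, P, hP, le_rfl⟩
    obtain ⟨Q, hQ, ⟨i, hi⟩, hQP⟩ := exists_povm_with_zero_sum_measTerm_le ρ (not_le.mp hk) hP
    obtain ⟨k', hk', P', hP', hP'Q⟩ :=
      exists_povm_card_le_sq_sum_measTerm_le ρ _ (hQ.succAbove hi)
    refine ⟨k', hk', P', hP', hP'Q.trans (le_of_eq_of_le ?_ hQP)⟩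
    rw [Fin.sum_univ_succAbove (fun j => measTerm ρ (Q j)) i, hi, measTerm_zero, zero_add]

end

theorem discord_inf_eq_inf_small_povm_general (m n : ℕ)
    (ρ : Matrix (Fin m × Fin n) (Fin m × Fin n) ℂ) :
    sInf {x : ℝ | ∃ (k : ℕ) (P : Fin k → Matrix (Fin n) (Fin n) ℂ),
        IsPOVM P ∧ x = ∑ i, measTerm ρ (P i)} =
      sInf {x : ℝ | ∃ k : ℕ, k ≤ n ^ 2 ∧ ∃ P : Fin k → Matrix (Fin n) (Fin n) ℂ,
        IsPOVM P ∧ x = ∑ i, measTerm ρ (P i)} := by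
  apply csInf_eq_csInf_of_forall_exists_le
  · rintro x ⟨k, P, hP, rfl⟩
    obtain ⟨k', hk', P', hP', hle⟩ := exists_povm_card_le_sq_sum_measTerm_le ρ P hP
    exact ⟨_, ⟨k', by simpa using hk', P', hP', rfl⟩, hle⟩
  · rintro y ⟨k, -, P, hP, rfl⟩
    exact ⟨_, ⟨k, P, hP, rfl⟩, le_rfl⟩

/-- In the definition of the POVM quantum discord `D_P(ρ_AB|B)`, the
infimum over all POVMs on `ℂⁿ` equals the infimum over POVMs with at most `n²`
operators. -/
theorem discord_inf_eq_inf_small_povm (m n : ℕ)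
    (ρ : Matrix (Fin m × Fin n) (Fin m × Fin n) ℂ) (hρ : IsState ρ) :
    sInf {x : ℝ | ∃ (k : ℕ) (P : Fin k → Matrix (Fin n) (Fin n) ℂ),
        IsPOVM P ∧ x = ∑ i, measTerm ρ (P i)} =
      sInf {x : ℝ | ∃ k : ℕ, k ≤ n ^ 2 ∧ ∃ P : Fin k → Matrix (Fin n) (Fin n) ℂ,
        IsPOVM P ∧ x = ∑ i, measTerm ρ (P i)} :=
  discord_inf_eq_inf_small_povm_general m n ρ
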